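/- arXiv:1409.0451 — 2 statements merged into one kernel-verified Lean document; each statement's English description precedes it below -/
import Mathlib

section
/- For every integer k ≥ 1, the function x ↦ (1 − (1 − x)^k)/(k x) is decreasing (antitone) on the interval (0, 1/k]. -/
/-! Since `t ↦ (1 - t) ^ k` is convex on `(-∞, 1]` and takes the value `1` at `0`, its secant slopes
`((1 - x) ^ k - 1) / x` from `0` increase with `x`; negating and dividing by `k` gives the claim on
`(0, 1] ⊇ (0, 1/k]`. -/

theorem convexOn_one_sub_pow (k : ℕ) : ConvexOn ℝ (Set.Iic 1) fun t : ℝ => (1 - t) ^ k := by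
  have h := (convexOn_pow k).comp_affineMap (AffineMap.lineMap (1 : ℝ) (0 : ℝ) : ℝ →ᵃ[ℝ] ℝ)
  have hs : (AffineMap.lineMap (1 : ℝ) (0 : ℝ) : ℝ →ᵃ[ℝ] ℝ) ⁻¹' Set.Ici 0 = Set.Iic 1 := by
    ext t; simp [AffineMap.lineMap_apply]
  have hf : (fun x : ℝ => x ^ k) ∘ (AffineMap.lineMap (1 : ℝ) (0 : ℝ) : ℝ →ᵃ[ℝ] ℝ) =
      fun t => (1 - t) ^ k := by
    ext t; simp [AffineMap.lineMap_apply, neg_add_eq_sub]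
  rwa [hs, hf] at h

theorem antitoneOn_one_sub_one_sub_pow_div (k : ℕ) :
    AntitoneOn (fun x : ℝ => (1 - (1 - x) ^ k) / x) (Set.Ioc 0 1) := by
  intro x ⟨hx0, hx1⟩ y ⟨hy0, hy1⟩ hxy
  have hslope := (convexOn_one_sub_pow k).secant_mono (a := 0) (by simp) (Set.mem_Iic.2 hx1)
    (Set.mem_Iic.2 hy1) hx0.ne' hy0.ne' hxy
  simp only [sub_zero, one_pow] at hslope
  dsimp only
  rw [← neg_sub ((1 - x) ^ k) 1, ← neg_sub ((1 - y) ^ k) 1, neg_div, neg_div]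
  exact neg_le_neg hslope

theorem one_sub_pow_div_antitone_general (k : ℕ) :
    AntitoneOn (fun x : ℝ => (1 - (1 - x) ^ k) / (k * x)) (Set.Ioc (0:ℝ) (1 / k)) := by
  have hsub : Set.Ioc (0 : ℝ) (1 / k) ⊆ Set.Ioc 0 1 :=
    Set.Ioc_subset_Ioc_right (by simpa using Nat.cast_inv_le_one k)
  intro x hx y hy hxy
  simp only [mul_comm (k : ℝ), ← div_div]
  exact div_le_div_of_nonneg_right
    (antitoneOn_one_sub_one_sub_pow_div k (hsub hx) (hsub hy) hxy) k.cast_nonneg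

theorem one_sub_pow_div_antitone (k : ℕ) (hk : 1 ≤ k) :
    AntitoneOn (fun x : ℝ => (1 - (1 - x) ^ k) / (k * x)) (Set.Ioc (0:ℝ) (1 / k)) :=
  one_sub_pow_div_antitone_general k
end

section
/- Under the parameter choices of the adaptive Taylor algorithm — n steps, hint I ≥ ∑_{i=0}^{n−1} γ_i, per-step truncation weights β_i ≤ λ ≤ 1/2 with orders ω_i = log_2(6 n max(1, ‖ỹ_i‖_∞)/η), rounding errors μ_i = η/(3n), initial error ε_0 ≤ (ε/3) e^{−I}, and η = ε e^{−I} — the error recurrence ε_{i+1} ≤ ε_i e^{γ_i} + max(1, ‖ỹ_i‖_∞) β_i^{ω_i}/(1 − β_i) + μ_i implies the final error satisfies ε_n ≤ ε. -/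
theorem adaptive_taylor_correct {d : ℕ} (n : ℕ) (hn : 0 < n)
    (ε I η lam : ℝ) (hε : 0 < ε) (hI : 0 < I)
    (hη : η = ε * Real.exp (-I))
    (hlam : 0 < lam) (hlam2 : lam ≤ 1 / 2)
    (γ β ω εs : ℕ → ℝ) (ytilde : ℕ → Fin d → ℝ)
    (hγ : ∀ i < n, 0 ≤ γ i) (hIγ : ∑ i ∈ Finset.range n, γ i ≤ I)
    (hβpos : ∀ i < n, 0 < β i) (hβ : ∀ i < n, β i ≤ lam)
    (hωnn : ∀ i < n, 0 ≤ ω i)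
    (hω : ∀ i < n, lam ^ ω i / (1 - lam) ≤ 2 * η / (6 * n * max 1 ‖ytilde i‖))
    (hε0 : 0 ≤ εs 0) (hε0' : εs 0 ≤ ε / 3 * Real.exp (-I))
    (hrec : ∀ i < n, εs (i + 1) ≤ εs i * Real.exp (γ i)
      + max 1 ‖ytilde i‖ * β i ^ ω i / (1 - β i) + η / (3 * n)) :
    εs n ≤ ε := by
  have hnR : (0:ℝ) < n := by exact_mod_cast hn
  have hηpos : 0 < η := by rw [hη]; positivity
  have key : ∀ i < n, εs (i+1) ≤ εs i * Real.exp (γ i) + 2 * (η / (3 * n)) := by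
    intro i hi
    have hM : (1:ℝ) ≤ max 1 ‖ytilde i‖ := le_max_left _ _
    have hM0 : (0:ℝ) < max 1 ‖ytilde i‖ := lt_of_lt_of_le one_pos hM
    have hβi := hβpos i hi
    have hβl := hβ i hi
    have h1b : (0:ℝ) < 1 - lam := by linarith
    have h1b' : 1 - lam ≤ 1 - β i := by linarith
    have hstep : β i ^ ω i ≤ lam ^ ω i :=
      Real.rpow_le_rpow hβi.le hβl (hωnn i hi)
    have h2 : β i ^ ω i / (1 - β i) ≤ lam ^ ω i / (1 - lam) := by
      apply div_le_div₀ (by positivity) hstep h1b h1b'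
    have h3 := hω i hi
    have h4 : max 1 ‖ytilde i‖ * β i ^ ω i / (1 - β i) ≤ η / (3 * n) := by
      have hmm : max 1 ‖ytilde i‖ * (β i ^ ω i / (1 - β i)) ≤
          max 1 ‖ytilde i‖ * (2 * η / (6 * n * max 1 ‖ytilde i‖)) :=
        mul_le_mul_of_nonneg_left (h2.trans h3) hM0.le
      have heq : max 1 ‖ytilde i‖ * (2 * η / (6 * n * max 1 ‖ytilde i‖)) = η / (3*n) := by
        field_simp
        ring
      calc max 1 ‖ytilde i‖ * β i ^ ω i / (1 - β i)
          = max 1 ‖ytilde i‖ * (β i ^ ω i / (1 - β i)) := by ring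
        _ ≤ _ := hmm
        _ = η / (3*n) := heq
    have := hrec i hi
    linarith
  have main : ∀ k, k ≤ n → εs k ≤ (ε/3 + 2*ε*k/(3*n)) *
      Real.exp (∑ i ∈ Finset.range k, γ i - I) := by
    intro k
    induction k with
    | zero =>
      intro _
      simpa using hε0'
    | succ k ih =>
      intro hk
      have hk' : k < n := hk
      have ihk := ih hk'.le
      have hexp : (0:ℝ) < Real.exp (γ k) := Real.exp_pos _
      have hS : ∑ i ∈ Finset.range (k+1), γ i = ∑ i ∈ Finset.range k, γ i + γ k :=
        Finset.sum_range_succ _ _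
      have hSnn : 0 ≤ ∑ i ∈ Finset.range (k+1), γ i :=
        Finset.sum_nonneg fun i hi => hγ i (lt_of_lt_of_le (Finset.mem_range.mp hi) hk)
    
      have h1 : εs k * Real.exp (γ k) ≤
          (ε/3 + 2*ε*k/(3*n)) * Real.exp (∑ i ∈ Finset.range (k+1), γ i - I) := by
        calc εs k * Real.exp (γ k)
            ≤ (ε/3 + 2*ε*k/(3*n)) * Real.exp (∑ i ∈ Finset.range k, γ i - I) * Real.exp (γ k) :=
              mul_le_mul_of_nonneg_right ihk hexp.le
          _ = (ε/3 + 2*ε*k/(3*n)) * Real.exp (∑ i ∈ Finset.range (k+1), γ i - I) := by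
              rw [mul_assoc, ← Real.exp_add, hS]; ring_nf
      have h2 : 2 * (η / (3*n)) ≤ 2*ε/(3*n) * Real.exp (∑ i ∈ Finset.range (k+1), γ i - I) := by
        rw [hη]
        have hmono : Real.exp (-I) ≤ Real.exp (∑ i ∈ Finset.range (k+1), γ i - I) :=
          Real.exp_le_exp.mpr (by linarith)
        calc 2 * (ε * Real.exp (-I) / (3*n)) = 2*ε/(3*n) * Real.exp (-I) := by ring
          _ ≤ _ := mul_le_mul_of_nonneg_left hmono (by positivity)
      have hkk := key k hk'
      have hfin : εs (k+1) ≤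
          (ε/3 + 2*ε*k/(3*n) + 2*ε/(3*n)) * Real.exp (∑ i ∈ Finset.range (k+1), γ i - I) := by
        have hsplit : (ε/3 + 2*ε*k/(3*n) + 2*ε/(3*n)) * Real.exp (∑ i ∈ Finset.range (k+1), γ i - I)
            = (ε/3 + 2*ε*k/(3*n)) * Real.exp (∑ i ∈ Finset.range (k+1), γ i - I)
              + 2*ε/(3*n) * Real.exp (∑ i ∈ Finset.range (k+1), γ i - I) := by ring
        rw [hsplit]
        linarith
      calc εs (k+1) ≤ _ := hfin
        _ = (ε/3 + 2*ε*(k+1:ℕ)/(3*n)) * Real.exp (∑ i ∈ Finset.range (k+1), γ i - I) := by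
            push_cast; ring
  have hm := main n le_rfl
  have hc : (ε/3 + 2*ε*n/(3*n)) = ε := by field_simp; ring
  have hexp1 : Real.exp (∑ i ∈ Finset.range n, γ i - I) ≤ 1 := by
    rw [Real.exp_le_one_iff]
    linarith
  calc εs n ≤ (ε/3 + 2*ε*n/(3*n)) * Real.exp (∑ i ∈ Finset.range n, γ i - I) := hm
    _ = ε * Real.exp (∑ i ∈ Finset.range n, γ i - I) := by rw [hc]
    _ ≤ ε * 1 := mul_le_mul_of_nonneg_left hexp1 hε.le
    _ = ε := mul_one _
end
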